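/- arXiv:1307.0909 — 3 statements merged into one kernel-verified Lean document; each statement's English description precedes it below -/
import Mathlib

section
/- If ψ and ω are regular sequences on [n] = {1, …, n} and ψ_{{1,2}} = ω_{{1,2}}, then ψ = ω. -/
/-!
Comparing the restrictions to `{u, z}` and `{v, z}` for a third letter `z` shows that all letters
of a regular sequence occur equally often; as `ψ` and `ω` agree on `{1, 2}`, they are permutations
of each other. For letters `u < v` we get `ψ_{u,v} ∼ ψ_{1,2} = ω_{1,2} ∼ ω_{u,v}`, and an order
equivalence between words on `{u, v}` in which both letters occur is the identity. Finally, a word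
is determined by its letter multiset together with its restrictions to pairs of distinct letters.
-/

noncomputable section

/-- Two words (over possibly different ordered alphabets) are order equivalent:
same length, and letters in corresponding positions compare the same way. -/
def OrdEquiv {α β : Type*} [LT α] [LT β] (u : List α) (v : List β) : Prop :=
  ∃ h : u.length = v.length, ∀ s t : Fin u.length,
    (u.get s < u.get t ↔ v.get (Fin.cast h s) < v.get (Fin.cast h t))

/-- A regular sequence on `[n] = {1, …, n}`: a word on `[n]` (with `n ≥ 3`) whose
restrictions to any two 2-element subsets of `[n]` are order equivalent. -/
def IsRegularSeq (n : ℕ) (w : List ℕ) : Prop :=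
  3 ≤ n ∧ (∀ x ∈ w, x ∈ Finset.Icc 1 n) ∧
    ∀ X Y : Finset ℕ, X ⊆ Finset.Icc 1 n → Y ⊆ Finset.Icc 1 n → X.card = 2 → Y.card = 2 →
      OrdEquiv (w.filter (· ∈ X)) (w.filter (· ∈ Y))

/-- Balanced words on the two-letter ordered alphabet `{a ≺ b}`: concatenations of
balanced blocks `a^r b^r` and `b^r a^r` with `r ≥ 1`. -/
inductive BalancedOn {α : Type*} (a b : α) : List α → Prop
  | nil : BalancedOn a b []
  | lo (r : ℕ) (w : List α) (hr : 0 < r) (hw : BalancedOn a b w) :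
      BalancedOn a b (List.replicate r a ++ List.replicate r b ++ w)
  | hi (r : ℕ) (w : List α) (hr : 0 < r) (hw : BalancedOn a b w) :
      BalancedOn a b (List.replicate r b ++ List.replicate r a ++ w)

/-- `HasBlockSizes a b w s`: the word `w` factors into balanced blocks on `{a ≺ b}`
whose sizes are given, in order, by the list `s`. -/
inductive HasBlockSizes {α : Type*} (a b : α) : List α → List ℕ → Prop
  | nil : HasBlockSizes a b [] []
  | lo (r : ℕ) (w : List α) (s : List ℕ) (hr : 0 < r) (hw : HasBlockSizes a b w s) :
      HasBlockSizes a b (List.replicate r a ++ List.replicate r b ++ w) (r :: s)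
  | hi (r : ℕ) (w : List α) (s : List ℕ) (hr : 0 < r) (hw : HasBlockSizes a b w s) :
      HasBlockSizes a b (List.replicate r b ++ List.replicate r a ++ w) (r :: s)

/-- The exponent sequence of the letter `u` in a word: the list of lengths of the
maximal runs of consecutive `u`'s. -/
def expSeq {α : Type*} [DecidableEq α] (u : α) : List α → List ℕ
  | [] => []
  | x :: xs =>
      let s := expSeq u xs
      if x = u then
        match xs with
        | [] => [1]
        | y :: _ => if y = u then (s.headD 0 + 1) :: s.tail else 1 :: s
      else s

/-- `Refines s t`: the sequence `s` is a refinement of `t`, i.e. `s` splits into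
consecutive nonempty groups whose sums are the entries of `t`. -/
inductive Refines : List ℕ → List ℕ → Prop
  | nil : Refines [] []
  | cons (g s t : List ℕ) (hg : g ≠ []) (h : Refines s t) :
      Refines (g ++ s) (g.sum :: t)

/-- `IsOccPos w u i p`: the (1-based) position of the `i`-th occurrence of the letter
`u` in `w` is `p` (that is, `|w(u,i)| = p`). -/
def IsOccPos {α : Type*} [DecidableEq α] (w : List α) (u : α) (i p : ℕ) : Prop :=
  1 ≤ p ∧ p ≤ w.length ∧ w.getD (p - 1) u = u ∧ (w.take p).count u = i

theorem OrdEquiv.trans {α β γ : Type*} [LT α] [LT β] [LT γ] {u : List α} {v : List β}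
    {w : List γ} (h₁ : OrdEquiv u v) (h₂ : OrdEquiv v w) : OrdEquiv u w :=
  ⟨h₁.1.trans h₂.1, fun s t => (h₁.2 s t).trans (h₂.2 (Fin.cast h₁.1 s) (Fin.cast h₁.1 t))⟩

theorem OrdEquiv.eq_of_forall_mem_pair {α : Type*} [LinearOrder α] {u v : α} (huv : u < v)
    {w w' : List α} (hw : ∀ x ∈ w, x = u ∨ x = v) (hw' : ∀ x ∈ w', x = u ∨ x = v)
    (hu : u ∈ w) (hv : v ∈ w) (h : OrdEquiv w w') : w = w' := by
  obtain ⟨hlen, hcmp⟩ := h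
  obtain ⟨iu, hiu⟩ := List.get_of_mem hu
  obtain ⟨iv, hiv⟩ := List.get_of_mem hv
  have lt_iff {x y : α} (hx : x = u ∨ x = v) (hy : y = u ∨ y = v) :
      x < y ↔ x = u ∧ y = v := by
    rcases hx with rfl | rfl <;> rcases hy with rfl | rfl <;>
      simp [huv, huv.ne, huv.ne', not_lt_of_gt huv]
  have mem (i : Fin w.length) := hw _ (List.get_mem w i)
  have mem' (i : Fin w.length) := hw' _ (List.get_mem w' (Fin.cast hlen i))
  refine List.ext_get hlen fun i hi _ => ?_
  rcases mem ⟨i, hi⟩ with hx | hx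
  · have := (hcmp ⟨i, hi⟩ iv).1 ((lt_iff (mem _) (mem iv)).2 ⟨hx, hiv⟩)
    exact hx.trans ((lt_iff (mem' _) (mem' iv)).1 this).1.symm
  · have := (hcmp iu ⟨i, hi⟩).1 ((lt_iff (mem iu) (mem _)).2 ⟨hiu, hx⟩)
    exact hx.trans ((lt_iff (mem' iu) (mem' _)).1 this).2.symm

theorem List.Perm.eq_of_filter_pair_eq {α : Type*} [DecidableEq α] {ψ ω : List α}
    (hp : ψ.Perm ω)
    (h : ∀ u ∈ ψ, ∀ v ∈ ψ, u ≠ v →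
      ψ.filter (· ∈ ({u, v} : Finset α)) = ω.filter (· ∈ ({u, v} : Finset α))) :
    ψ = ω := by
  induction ψ generalizing ω with
  | nil => exact hp.nil_eq
  | cons a ψ ih =>
    obtain _ | ⟨b, ω⟩ := ω
    · exact absurd hp.eq_nil (List.cons_ne_nil _ _)
    obtain rfl : a = b := by
      by_contra hab
      have := h a mem_cons_self b (hp.mem_iff.2 mem_cons_self) hab
      simp [hab] at this
    refine congrArg _ (ih hp.cons_inv fun u hu v hv huv => ?_)
    have := h u (mem_cons_of_mem _ hu) v (mem_cons_of_mem _ hv) huv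
    rw [List.filter_cons, List.filter_cons] at this
    split_ifs at this
    exacts [List.cons_injective this, this]

theorem List.length_filter_mem_pair {α : Type*} [DecidableEq α] {u v : α} (huv : u ≠ v)
    (w : List α) :
    (w.filter (· ∈ ({u, v} : Finset α))).length = w.count u + w.count v := by
  induction w with
  | nil => simp
  | cons a w ih =>
    by_cases h1 : a = u <;> by_cases h2 : a = v <;>
      simp [h1, h2, huv, huv.symm] at ih ⊢ <;> omega

namespace IsRegularSeq

variable {n : ℕ} {w : List ℕ}

theorem count_eq (hw : IsRegularSeq n w) {u v : ℕ} (hu : u ∈ Finset.Icc 1 n)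
    (hv : v ∈ Finset.Icc 1 n) : w.count u = w.count v := by
  rcases eq_or_ne u v with rfl | huv
  · rfl
  obtain ⟨z, hz, hzuv⟩ : ∃ z ∈ Finset.Icc 1 n, z ∉ ({u, v} : Finset ℕ) := by
    refine Finset.exists_mem_notMem_of_card_lt_card ?_
    have := Finset.card_le_two (a := u) (b := v)
    simp only [Nat.card_Icc]
    have := hw.1
    omega
  simp only [Finset.mem_insert, Finset.mem_singleton, not_or] at hzuv
  have hpair {x} (hx : x ∈ Finset.Icc 1 n) : ({x, z} : Finset ℕ) ⊆ Finset.Icc 1 n :=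
    Finset.insert_subset hx (Finset.singleton_subset_iff.2 hz)
  have hlen := (hw.2.2 {u, z} {v, z} (hpair hu) (hpair hv) (Finset.card_pair (Ne.symm hzuv.1))
    (Finset.card_pair (Ne.symm hzuv.2))).1
  rw [List.length_filter_mem_pair (Ne.symm hzuv.1),
    List.length_filter_mem_pair (Ne.symm hzuv.2)] at hlen
  omega

theorem perm {ω : List ℕ} (hw : IsRegularSeq n w) (hω : IsRegularSeq n ω) {a : ℕ}
    (ha : a ∈ Finset.Icc 1 n) (hc : w.count a = ω.count a) : w.Perm ω := by
  refine List.perm_iff_count.2 fun x => ?_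
  by_cases hx : x ∈ Finset.Icc 1 n
  · rw [hw.count_eq hx ha, hc, hω.count_eq ha hx]
  · rw [List.count_eq_zero.2 fun hm => hx (hw.2.1 x hm),
      List.count_eq_zero.2 fun hm => hx (hω.2.1 x hm)]

theorem filter_pair_eq {ψ ω : List ℕ} (hψ : IsRegularSeq n ψ) (hω : IsRegularSeq n ω)
    (h : ψ.filter (· ∈ ({1, 2} : Finset ℕ)) = ω.filter (· ∈ ({1, 2} : Finset ℕ)))
    {u v : ℕ} (huv : u < v) (hu : u ∈ ψ) (hv : v ∈ ψ) :
    ψ.filter (· ∈ ({u, v} : Finset ℕ)) = ω.filter (· ∈ ({u, v} : Finset ℕ)) := by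
  have huvI : ({u, v} : Finset ℕ) ⊆ Finset.Icc 1 n :=
    Finset.insert_subset (hψ.2.1 u hu) (Finset.singleton_subset_iff.2 (hψ.2.1 v hv))
  have h12I : ({1, 2} : Finset ℕ) ⊆ Finset.Icc 1 n := by
    have := hψ.1
    intro x
    simp only [Finset.mem_insert, Finset.mem_singleton, Finset.mem_Icc]
    omega
  have hcard : ({u, v} : Finset ℕ).card = 2 := Finset.card_pair huv.ne
  have hcard12 : ({1, 2} : Finset ℕ).card = 2 := rfl
  have hequiv := (hψ.2.2 _ _ huvI h12I hcard hcard12).trans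
    (h ▸ hω.2.2 _ _ h12I huvI hcard12 hcard)
  have hpair {w : List ℕ} : ∀ x ∈ w.filter (· ∈ ({u, v} : Finset ℕ)), x = u ∨ x = v :=
    fun x hx => by simpa using (List.mem_filter.1 hx).2
  exact hequiv.eq_of_forall_mem_pair huv hpair hpair (List.mem_filter.2 ⟨hu, by simp⟩)
    (List.mem_filter.2 ⟨hv, by simp⟩)

end IsRegularSeq

/-- **Lemma.** A regular sequence on `[n]` is determined by its restriction
to `{1, 2}`. -/
theorem regularSeq_ext (n : ℕ) (ψ ω : List ℕ)
    (hψ : IsRegularSeq n ψ) (hω : IsRegularSeq n ω)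
    (h : ψ.filter (· ∈ ({1, 2} : Finset ℕ)) = ω.filter (· ∈ ({1, 2} : Finset ℕ))) :
    ψ = ω := by
  have hperm : ψ.Perm ω := by
    refine hψ.perm hω (a := 1) (Finset.mem_Icc.2 ⟨le_rfl, by linarith [hψ.1]⟩) ?_
    have := congrArg (List.count 1) h
    rwa [List.count_filter (by decide), List.count_filter (by decide)] at this
  refine hperm.eq_of_filter_pair_eq fun u hu v hv huv => ?_
  rcases huv.lt_or_gt with huv | huv
  · exact hψ.filter_pair_eq hω h huv hu hv
  · rw [Finset.pair_comm]
    exact hψ.filter_pair_eq hω h huv hv hu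

end
end

section
/- A word ω on the ordered alphabet {a, b} (with a ≺ b) is balanced if and only if the following hold: (i) ω contains the same number of occurrences of a as of b; (ii) whenever the position immediately after the i-th occurrence of a is the position of the (j+1)-th occurrence of b (i.e. |ω(a,i)| + 1 = |ω(b,j+1)|), then i ≥ j; (iii) whenever the position immediately after the i-th occurrence of b is the position of the (j+1)-th occurrence of a (i.e. |ω(b,i)| + 1 = |ω(a,j+1)|), then i ≥ j. -/
noncomputable section

/-
A switch `x, !x` in a balanced word lies either inside a block `x^r (!x)^r`, right after its
run `x^r`, or between two blocks; since the blocks before it have equal counts, in both cases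
the prefix ending with that `x` has at least as many `x`'s as `!x`'s.
Conversely, write a word satisfying the conditions as `c^r (!c)^s u` with `u` empty or
starting with `c`. If `u` is empty, equal counts force `r = s`; otherwise the condition at
the switch from `!c` back to `c` gives `r ≤ s`. Either way `c^r (!c)^r` is a leading block,
and the rest, which follows a prefix with equal counts, again satisfies the conditions.
-/

open List

/-- Condition (ii) (`x = false`) or (iii) (`x = true`), read off factorizations
`w = p ++ x :: !x :: q` instead of occurrence positions. -/
def SwitchBound (x : Bool) (w : List Bool) : Prop :=
  ∀ p q, w = p ++ x :: (!x) :: q → (p ++ [x]).count (!x) ≤ (p ++ [x]).count x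

section IsOccPos

variable {α : Type*} [DecidableEq α]

theorem isOccPos_append_cons (p q : List α) (u : α) :
    IsOccPos (p ++ u :: q) u (p.count u + 1) (p.length + 1) := by
  refine ⟨by omega, by simp, ?_, by simp [take_append, take_of_length_le]⟩
  rw [Nat.add_sub_cancel]
  simp

theorem IsOccPos.exists_eq_append_cons {w : List α} {u : α} {i k : ℕ} (h : IsOccPos w u i k) :
    ∃ p q, w = p ++ u :: q ∧ p.length + 1 = k ∧ p.count u + 1 = i := by
  obtain ⟨hk, hkw, hu, rfl⟩ := h
  obtain ⟨n, rfl⟩ := Nat.exists_eq_add_of_le' hk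
  have hlt : n < w.length := by omega
  rw [Nat.add_sub_cancel, getD_eq_getElem _ _ hlt] at hu
  refine ⟨w.take n, w.drop (n + 1), ?_, by simp; omega, ?_⟩
  · rw [← hu, getElem_cons_drop, take_append_drop]
  · rw [take_add_one, getElem?_eq_getElem hlt, hu]
    simp

end IsOccPos

theorem forall_isOccPos_iff_switchBound (x : Bool) (w : List Bool) :
    (∀ i j k : ℕ, IsOccPos w x i k → IsOccPos w (!x) (j + 1) (k + 1) → j ≤ i) ↔
      SwitchBound x w := by
  constructor
  · rintro h p q rfl
    have hx := isOccPos_append_cons p ((!x) :: q) x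
    have hnx := isOccPos_append_cons (p ++ [x]) q (!x)
    simp only [append_assoc, cons_append, nil_append, length_append, length_singleton] at hnx
    simpa using h _ _ _ hx hnx
  · intro h i j k hx hnx
    obtain ⟨p, q, rfl, rfl, rfl⟩ := hx.exists_eq_append_cons
    obtain ⟨p', q', hw, hlen, hj⟩ := hnx.exists_eq_append_cons
    rw [append_cons] at hw
    obtain ⟨rfl, rfl⟩ := append_inj hw (by simp; omega)
    have := h p q' (by simp)
    simp at this hj
    omega

theorem count_replicate_append_replicate_not (c x : Bool) (r : ℕ) :
    (replicate r c ++ replicate r (!c)).count x = r := by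
  cases c <;> cases x <;> simp [count_replicate]

namespace SwitchBound

theorem replicate_append_replicate_not (x c : Bool) (r s : ℕ) :
    SwitchBound x (replicate r c ++ replicate s (!c)) := by
  intro p q h
  have hsorted : (replicate r c ++ replicate s (!c)).Pairwise (fun a b => b = c → a = c) := by
    simp [pairwise_append, pairwise_replicate]
  rw [h, pairwise_append, pairwise_cons] at hsorted
  obtain ⟨-, ⟨hx, -⟩, hp⟩ := hsorted
  cases Bool.eq_or_eq_not x c with
  | inl hxc =>
    subst hxc
    have : (!x) ∉ p := fun hmem => by simpa using hp _ hmem x mem_cons_self rfl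
    simp [count_eq_zero.mpr this]
  | inr hxc =>
    subst hxc
    simpa using hx _ mem_cons_self

variable {x : Bool} {u v : List Bool}

theorem append (hcount : u.count x = u.count (!x)) (hu : SwitchBound x u) (hv : SwitchBound x v) :
    SwitchBound x (u ++ v) := by
  intro p q h
  rcases append_eq_append_iff.mp h with ⟨a, rfl, hva⟩ | ⟨b, rfl, hb⟩
  · have := hv a q hva
    simp only [append_assoc, count_append] at this ⊢
    omega
  · match b, hb with
    | [], _ =>
      rw [append_nil] at hcount
      simp [count_append] at hcount ⊢
      omega
    | [y], hb =>
      obtain ⟨rfl, -⟩ := cons.inj hb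
      simp [count_append] at hcount ⊢
      omega
    | y :: z :: b, hb =>
      simp only [cons_append, cons.injEq] at hb
      obtain ⟨rfl, rfl, -⟩ := hb
      exact hu p b (by simp)

theorem of_append (hcount : u.count x = u.count (!x)) (h : SwitchBound x (u ++ v)) :
    SwitchBound x v := by
  rintro p q rfl
  have := h (u ++ p) q (by simp)
  simp only [append_assoc, count_append] at this ⊢
  omega

end SwitchBound

theorem BalancedOn.switchBound {w : List Bool} (h : BalancedOn false true w) (x : Bool) :
    SwitchBound x w := by
  induction h with
  | nil => rintro p q h; simp at h
  | lo r w _ _ ih | hi r w _ _ ih =>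
    exact (SwitchBound.replicate_append_replicate_not x _ r r).append
      ((count_replicate_append_replicate_not _ x r).trans
        (count_replicate_append_replicate_not _ _ r).symm) ih

theorem BalancedOn.count_false_eq_count_true {w : List Bool} (h : BalancedOn false true w) :
    w.count false = w.count true := by
  induction h with
  | nil => rfl
  | lo r w _ _ ih | hi r w _ _ ih => simp [count_replicate, ih]

theorem exists_eq_replicate_append {α : Type*} [DecidableEq α] (c : α) :
    ∀ l : List α, ∃ n l', l = replicate n c ++ l' ∧ l'.head? ≠ some c
  | [] => ⟨0, [], rfl, by simp⟩
  | y :: t => by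
    by_cases hy : y = c
    · obtain ⟨n, l', rfl, hl'⟩ := exists_eq_replicate_append c t
      exact ⟨n + 1, l', by simp [hy, replicate_succ], hl'⟩
    · exact ⟨0, y :: t, rfl, by simpa using hy⟩

theorem exists_eq_block_append {c : Bool} {t : List Bool}
    (hcount : (c :: t).count c = (c :: t).count (!c)) (h : SwitchBound (!c) (c :: t)) :
    ∃ r, 0 < r ∧ ∃ w', c :: t = replicate r c ++ replicate r (!c) ++ w' := by
  obtain ⟨r, v, hrv, hv⟩ := exists_eq_replicate_append c (c :: t)
  obtain ⟨s, u, rfl, hu⟩ := exists_eq_replicate_append (!c) v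
  have hr : 0 < r := by
    refine Nat.pos_of_ne_zero fun hr => ?_
    rw [hr, replicate_zero, nil_append] at hrv
    simp [← hrv] at hv
  have hrs : r ≤ s := by
    rcases u with _ | ⟨y, u⟩
    · rw [hrv] at hcount
      cases c <;> simp [count_replicate] at hcount <;> omega
    · have hy : y = c := by simpa using hu
      cases s with
      | zero => simp [hy] at hv
      | succ s =>
      have := h (replicate r c ++ replicate s (!c)) u (by rw [hrv, hy]; simp [replicate_succ'])
      cases c <;> simp [count_replicate] at this <;> omega
  obtain ⟨d, rfl⟩ := Nat.exists_eq_add_of_le hrs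
  exact ⟨r, hr, replicate d (!c) ++ u, by rw [hrv, replicate_add]; simp only [append_assoc]⟩

theorem balancedOn_of_switchBound :
    ∀ {w : List Bool}, w.count false = w.count true → (∀ x, SwitchBound x w) →
      BalancedOn false true w
  | [], _, _ => .nil
  | c :: t, hcount, h => by
    obtain ⟨r, hr, w', hw⟩ :=
      exists_eq_block_append (by cases c <;> simpa [eq_comm] using hcount) (h (!c))
    have hblock (x : Bool) : (replicate r c ++ replicate r (!c)).count x = r :=
      count_replicate_append_replicate_not c x r
    rw [hw] at hcount h ⊢
    have : w'.length ≤ t.length := by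
      have := congrArg length hw
      simp only [length_cons, length_append, length_replicate] at this
      omega
    have hw' : BalancedOn false true w' :=
      balancedOn_of_switchBound (by simp only [count_append, hblock] at hcount; omega)
        fun x => (h x).of_append ((hblock x).trans (hblock !x).symm)
    cases c
    exacts [.lo r w' hr hw', .hi r w' hr hw']
termination_by w => w.length

/-- **Lemma (characterization of balanced words).** A word on `{a ≺ b}` (here
`a = false`, `b = true`) is balanced iff it has as many `a`'s as `b`'s, and whenever
the position immediately after the `i`-th occurrence of one letter is the position of
the `(j+1)`-st occurrence of the other letter, then `i ≥ j`. -/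
theorem balanced_iff (w : List Bool) :
    BalancedOn false true w ↔
      (w.count false = w.count true ∧
       (∀ i j p : ℕ, IsOccPos w false i p → IsOccPos w true (j + 1) (p + 1) → j ≤ i) ∧
       (∀ i j p : ℕ, IsOccPos w true i p → IsOccPos w false (j + 1) (p + 1) → j ≤ i)) := by
  constructor
  · intro h
    exact ⟨h.count_false_eq_count_true, (forall_isOccPos_iff_switchBound false w).mpr
      (h.switchBound false), (forall_isOccPos_iff_switchBound true w).mpr (h.switchBound true)⟩
  · rintro ⟨hcount, hfalse, htrue⟩
    refine balancedOn_of_switchBound hcount fun x => ?_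
    cases x
    exacts [(forall_isOccPos_iff_switchBound false w).mp hfalse,
      (forall_isOccPos_iff_switchBound true w).mp htrue]

end
end

section
/- Let ω be a balanced word on the ordered alphabet {a, b} and suppose ω = ω_1 · ω_2. Then the following are equivalent: (i) ω_1 is balanced; (ii) ω_2 is balanced; (iii) ω_1 contains the same number of a's as b's; (iv) ω_2 contains the same number of a's as b's. -/
noncomputable section

/-!
Counting letters shows that balanced words have as many `a`'s as `b`'s, so for a balanced
`w₁ ++ w₂` conditions (iii) and (iv) are equivalent and are implied by (i) and (ii). Conversely,
a proper nonempty prefix of a block `x^r y^r` has more `x`'s than `y`'s, so a cut with equal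
counts never falls strictly inside a block: it separates `w₁ ++ w₂` between two blocks, and both
sides are concatenations of blocks.
-/

namespace BalancedOn

variable {α : Type*} {a b : α}

theorem count_eq [DecidableEq α] (hab : a ≠ b) {w : List α} (h : BalancedOn a b w) :
    w.count a = w.count b := by
  induction h with
  | nil => rfl
  | lo _ _ _ _ ih | hi _ _ _ _ ih =>
    simp [List.count_append, List.count_replicate, hab, hab.symm, ih]

theorem append {u v : List α} (hu : BalancedOn a b u) (hv : BalancedOn a b v) :
    BalancedOn a b (u ++ v) := by
  induction hu with
  | nil => exact hv
  | lo r _ hr _ ih => simpa only [List.append_assoc] using lo r _ hr ih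
  | hi r _ hr _ ih => simpa only [List.append_assoc] using hi r _ hr ih

theorem replicate_lo {r : ℕ} (hr : 0 < r) :
    BalancedOn a b (List.replicate r a ++ List.replicate r b) := by
  simpa using lo r [] hr nil

theorem replicate_hi {r : ℕ} (hr : 0 < r) :
    BalancedOn a b (List.replicate r b ++ List.replicate r a) := by
  simpa using hi r [] hr nil

end BalancedOn

theorem eq_nil_or_eq_nil_of_append_eq_replicate_append_replicate {α : Type*} [DecidableEq α]
    {x y : α} (hxy : x ≠ y) {r : ℕ} {u t : List α}
    (h : u ++ t = List.replicate r x ++ List.replicate r y) (hc : u.count x = u.count y) :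
    u = [] ∨ t = [] := by
  have hu : u = (List.replicate r x ++ List.replicate r y).take u.length := by
    rw [← h, List.take_left]
  have hlen : u.length + t.length = r + r := by
    simpa only [List.length_append, List.length_replicate] using congrArg List.length h
  rw [hu, List.take_append, List.take_replicate, List.take_replicate] at hc
  simp only [List.count_append, List.count_replicate, List.length_replicate, beq_self_eq_true,
    beq_iff_eq, hxy, hxy.symm, if_true, if_false] at hc
  rw [← List.length_eq_zero_iff, ← List.length_eq_zero_iff]
  omega

section Split

variable {α : Type*} [DecidableEq α] {a b : α}

theorem BalancedOn.split_block_append {B w : List α} (hab : a ≠ b) (hB : BalancedOn a b B)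
    (hBcut : ∀ u t, u ++ t = B → u.count a = u.count b → u = [] ∨ t = [])
    (hw : BalancedOn a b w)
    (ih : ∀ u v, u ++ v = w → u.count a = u.count b → BalancedOn a b u ∧ BalancedOn a b v)
    (u v : List α) (huv : u ++ v = B ++ w) (hc : u.count a = u.count b) :
    BalancedOn a b u ∧ BalancedOn a b v := by
  rcases List.append_eq_append_iff.mp huv with ⟨t, rfl, rfl⟩ | ⟨c, rfl, rfl⟩
  · rcases hBcut u t rfl hc with rfl | rfl
    · exact ⟨.nil, hB.append hw⟩
    · exact ⟨by simpa using hB, hw⟩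
  · have hcB := hB.count_eq hab
    simp only [List.count_append] at hc
    obtain ⟨hc', hv⟩ := ih c v rfl (by omega)
    exact ⟨hB.append hc', hv⟩

theorem BalancedOn.split (hab : a ≠ b) {w : List α} (h : BalancedOn a b w) :
    ∀ u v, u ++ v = w → u.count a = u.count b → BalancedOn a b u ∧ BalancedOn a b v := by
  induction h with
  | nil =>
    intro u v huv _
    obtain ⟨rfl, rfl⟩ := List.append_eq_nil_iff.mp huv
    exact ⟨.nil, .nil⟩
  | lo r w hr hw ih =>
    exact split_block_append hab (replicate_lo hr)
      (fun _ _ h hc => eq_nil_or_eq_nil_of_append_eq_replicate_append_replicate hab h hc) hw ih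
  | hi r w hr hw ih =>
    exact split_block_append hab (replicate_hi hr)
      (fun _ _ h hc =>
        eq_nil_or_eq_nil_of_append_eq_replicate_append_replicate hab.symm h hc.symm) hw ih

end Split

/-- **Corollary.** If `w₁ ++ w₂` is balanced then: `w₁` balanced ↔ `w₂` balanced ↔
`w₁` has as many `a`'s as `b`'s ↔ `w₂` has as many `a`'s as `b`'s. -/
theorem balanced_concat (w₁ w₂ : List Bool) (h : BalancedOn false true (w₁ ++ w₂)) :
    ((BalancedOn false true w₁ ↔ BalancedOn false true w₂) ∧
     (BalancedOn false true w₁ ↔ w₁.count false = w₁.count true) ∧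
     (BalancedOn false true w₁ ↔ w₂.count false = w₂.count true)) := by
  have hab : false ≠ true := Bool.false_ne_true
  have htotal := h.count_eq hab
  simp only [List.count_append] at htotal
  have hcount : w₁.count false = w₁.count true ↔ w₂.count false = w₂.count true := by omega
  have hsplit := h.split hab w₁ w₂ rfl
  have h₁ : BalancedOn false true w₁ ↔ w₁.count false = w₁.count true :=
    ⟨(·.count_eq hab), fun hc => (hsplit hc).1⟩
  have h₂ : BalancedOn false true w₂ ↔ w₂.count false = w₂.count true :=
    ⟨(·.count_eq hab), fun hc => (hsplit (hcount.mpr hc)).2⟩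
  exact ⟨h₁.trans (hcount.trans h₂.symm), h₁, h₁.trans hcount⟩

end
end
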